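/- arXiv:1711.09946 — 6 statements merged into one kernel-verified Lean document; each statement's English description precedes it below -/
import Mathlib

section
/- Let A = (Σ, Q, I, F, δ) be a complete NFA. The relation P(⊑^{bw}, ⊏^{di-sim}), which compares source states of transitions by backward finite trace inclusion and target states by strict direct forward simulation, is good for pruning: L(Prune(A, P(⊑^{bw}, ⊏^{di-sim}))) = L(A). -/
/-- A nondeterministic automaton (used both as NBA and NFA):
initial states, accepting states, and a transition relation. -/
structure NA (A : Type*) (Q : Type*) where
  ini : Set Q
  acc : Set Q
  trans : Set (Q × A × Q)

namespace NA

variable {A Q Q₁ Q₂ : Type*}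

/-- Forward and backward completeness. -/
def Complete (M : NA A Q) : Prop :=
  ∀ (p : Q) (a : A), (∃ q, (q, a, p) ∈ M.trans) ∧ (∃ q, (p, a, q) ∈ M.trans)

/-- Infinite run on an infinite word. -/
def InfRun (M : NA A Q) (w : ℕ → A) (π : ℕ → Q) : Prop :=
  ∀ i, (π i, w i, π (i + 1)) ∈ M.trans

/-- Fairness: accepting states are visited infinitely often. -/
def Fair (M : NA A Q) (π : ℕ → Q) : Prop :=
  ∀ n, ∃ m, n ≤ m ∧ π m ∈ M.acc

/-- The ω-language of a Büchi automaton. -/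
def BuchiLang (M : NA A Q) : Set (ℕ → A) :=
  {w | ∃ π, π 0 ∈ M.ini ∧ M.InfRun w π ∧ M.Fair π}

/-- Finite run on a finite word (only the first `w.length + 1` values of `π` matter). -/
def FinRun (M : NA A Q) (w : List A) (π : ℕ → Q) : Prop :=
  ∀ (i : ℕ) (h : i < w.length), (π i, w.get ⟨i, h⟩, π (i + 1)) ∈ M.trans

/-- The finite-word language of an NFA. -/
def FinLang (M : NA A Q) : Set (List A) :=
  {w | ∃ π, π 0 ∈ M.ini ∧ M.FinRun w π ∧ π w.length ∈ M.acc}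

/-- Direct (forward) trace inclusion. -/
def DiTraceIncl (M : NA A Q₁) (N : NA A Q₂) (p : Q₁) (q : Q₂) : Prop :=
  ∀ (w : ℕ → A) (π : ℕ → Q₁), π 0 = p → M.InfRun w π →
    ∃ ρ : ℕ → Q₂, ρ 0 = q ∧ N.InfRun w ρ ∧ ∀ i, π i ∈ M.acc → ρ i ∈ N.acc

/-- Fair trace inclusion. -/
def FairTraceIncl (M : NA A Q₁) (N : NA A Q₂) (p : Q₁) (q : Q₂) : Prop :=
  ∀ (w : ℕ → A) (π : ℕ → Q₁), π 0 = p → M.InfRun w π →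
    ∃ ρ : ℕ → Q₂, ρ 0 = q ∧ N.InfRun w ρ ∧ (M.Fair π → N.Fair ρ)

/-- Backward direct trace inclusion. -/
def BwDiTraceIncl (M : NA A Q₁) (N : NA A Q₂) (p : Q₁) (q : Q₂) : Prop :=
  ∀ (w : List A) (π : ℕ → Q₁), π 0 ∈ M.ini → M.FinRun w π → π w.length = p →
    ∃ ρ : ℕ → Q₂, ρ 0 ∈ N.ini ∧ N.FinRun w ρ ∧ ρ w.length = q ∧
      ∀ i, i ≤ w.length → π i ∈ M.acc → ρ i ∈ N.acc

/-- Forward finite trace inclusion. -/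
def FwFinTraceIncl (M : NA A Q₁) (N : NA A Q₂) (p : Q₁) (q : Q₂) : Prop :=
  ∀ (w : List A) (π : ℕ → Q₁), π 0 = p → M.FinRun w π → π w.length ∈ M.acc →
    ∃ ρ : ℕ → Q₂, ρ 0 = q ∧ N.FinRun w ρ ∧ ρ w.length ∈ N.acc

/-- Backward finite trace inclusion. -/
def BwFinTraceIncl (M : NA A Q₁) (N : NA A Q₂) (p : Q₁) (q : Q₂) : Prop :=
  ∀ (w : List A) (π : ℕ → Q₁), π 0 ∈ M.ini → M.FinRun w π → π w.length = p →
    ∃ ρ : ℕ → Q₂, ρ 0 ∈ N.ini ∧ N.FinRun w ρ ∧ ρ w.length = q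

/-- Counting backward trace inclusion: the matching initial trace visits
accepting states at least as often. -/
def CountBwTraceIncl (M : NA A Q) (p q : Q) : Prop :=
  ∀ (w : List A) (π : ℕ → Q), π 0 ∈ M.ini → M.FinRun w π → π w.length = p →
    ∃ ρ : ℕ → Q, ρ 0 ∈ M.ini ∧ M.FinRun w ρ ∧ ρ w.length = q ∧
      {i | i ≤ w.length ∧ π i ∈ M.acc}.ncard ≤ {i | i ≤ w.length ∧ ρ i ∈ M.acc}.ncard

/-- `R` is a direct forward simulation. -/
def IsDiSim (M : NA A Q₁) (N : NA A Q₂) (R : Q₁ → Q₂ → Prop) : Prop :=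
  ∀ p q, R p q → (p ∈ M.acc → q ∈ N.acc) ∧
    ∀ a p', (p, a, p') ∈ M.trans → ∃ q', (q, a, q') ∈ N.trans ∧ R p' q'

/-- Direct forward simulation (the largest direct forward simulation). -/
def DiSim (M : NA A Q₁) (N : NA A Q₂) (p : Q₁) (q : Q₂) : Prop :=
  ∃ R, IsDiSim M N R ∧ R p q

/-- `R` is a backward direct simulation (matching accepting and initial states). -/
def IsBwDiSim (M : NA A Q₁) (N : NA A Q₂) (R : Q₁ → Q₂ → Prop) : Prop :=
  ∀ p q, R p q → (p ∈ M.acc → q ∈ N.acc) ∧ (p ∈ M.ini → q ∈ N.ini) ∧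
    ∀ a p', (p', a, p) ∈ M.trans → ∃ q', (q', a, q) ∈ N.trans ∧ R p' q'

/-- Backward direct simulation (the largest backward direct simulation). -/
def BwDiSim (M : NA A Q₁) (N : NA A Q₂) (p : Q₁) (q : Q₂) : Prop :=
  ∃ R, IsBwDiSim M N R ∧ R p q

/-- `R` is a backward finite-word simulation (matching only initial states). -/
def IsBwSim (M : NA A Q₁) (N : NA A Q₂) (R : Q₁ → Q₂ → Prop) : Prop :=
  ∀ p q, R p q → (p ∈ M.ini → q ∈ N.ini) ∧
    ∀ a p', (p', a, p) ∈ M.trans → ∃ q', (q', a, q) ∈ N.trans ∧ R p' q'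

/-- Backward finite-word simulation (the largest backward finite-word simulation). -/
def BwSim (M : NA A Q₁) (N : NA A Q₂) (p : Q₁) (q : Q₂) : Prop :=
  ∃ R, IsBwSim M N R ∧ R p q

/-- Strict version of a relation: `x ⊏ y` iff `x ⊑ y` and not `y ⊑ x`. -/
def StrictRel (R : Q₁ → Q₁ → Prop) (x y : Q₁) : Prop := R x y ∧ ¬ R y x

/-- Comparing two transitions endpoint-wise; they must carry the same symbol. -/
def PairRel (Rb Rf : Q₁ → Q₂ → Prop) (t : Q₁ × A × Q₁) (t' : Q₂ × A × Q₂) : Prop :=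
  t.2.1 = t'.2.1 ∧ Rb t.1 t'.1 ∧ Rf t.2.2 t'.2.2

/-- Pruned automaton: keep the transitions that are maximal w.r.t. `P`. -/
def prune (M : NA A Q) (P : (Q × A × Q) → (Q × A × Q) → Prop) : NA A Q :=
  ⟨M.ini, M.acc, {t | t ∈ M.trans ∧ ¬ ∃ t' ∈ M.trans, P t t'}⟩

/-- Cross-pruned automaton: remove transitions of `M` subsumed by transitions of `N`. -/
def pruneAB (M : NA A Q₁) (N : NA A Q₂) (P : (Q₁ × A × Q₁) → (Q₂ × A × Q₂) → Prop) :
    NA A Q₁ :=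
  ⟨M.ini, M.acc, {t | t ∈ M.trans ∧ ¬ ∃ t' ∈ N.trans, P t t'}⟩

/-- Saturated automaton: add every transition `S`-below an existing transition. -/
def saturate (M : NA A Q) (S : (Q × A × Q) → (Q × A × Q) → Prop) : NA A Q :=
  ⟨M.ini, M.acc, {t | ∃ t' ∈ M.trans, S t t'}⟩

/-- A transition is transient if it occurs at most once in every trace. -/
def Transient (M : NA A Q) (t : Q × A × Q) : Prop :=
  ∀ (w : ℕ → A) (π : ℕ → Q), M.InfRun w π →
    ∀ i j, (π i, w i, π (i + 1)) = t → (π j, w j, π (j + 1)) = t → i = j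

/-- Equivalence class of `q` w.r.t. the equivalence induced by the preorder `R`. -/
def cls (R : Q → Q → Prop) (q : Q) : Set Q := {x | R q x ∧ R x q}

/-- Quotient automaton by the preorder `R`; equivalence classes are modeled as
the corresponding subsets of `Q`. -/
def quot (M : NA A Q) (R : Q → Q → Prop) : NA A (Set Q) :=
  ⟨{c | ∃ q ∈ M.ini, c = cls R q},
   {c | ∃ q ∈ M.acc, c = cls R q},
   {t | ∃ q₁ q₂, t.1 = cls R q₁ ∧ t.2.2 = cls R q₂ ∧ (q₁, t.2.1, q₂) ∈ M.trans}⟩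

/-- `R`-jumping run: before each transition, jump to an `R`-larger state. -/
def JumpRun (M : NA A Q) (R : Q → Q → Prop) (w : ℕ → A) (π π' : ℕ → Q) : Prop :=
  ∀ i, R (π i) (π' i) ∧ (π' i, w i, π (i + 1)) ∈ M.trans

/-- A jumping run is fair if it is accepting at infinitely many steps. -/
def JumpFair (M : NA A Q) (R : Q → Q → Prop) (π π' : ℕ → Q) : Prop :=
  ∀ n, ∃ m, n ≤ m ∧ ∃ q'' ∈ M.acc, R (π m) q'' ∧ R q'' (π' m)

end NA

/-!
Rank a state by the number of states it direct-simulates. Given `w ∈ L(A)`, take an accepting run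
`ρ` on `w` whose rank vector, read lexicographically from the last position backwards, is maximal.
If its `i`-th transition were pruned by some `(p, a, r)` with `ρ i ⊑ᵇʷ p` and `ρ (i + 1) ⊏ᵈⁱ r`,
then an initial trace to `p` (backward inclusion), the transition `(p, a, r)`, and a trace from `r`
simulating the rest of `ρ` would form an accepting run whose rank vector is strictly larger at
position `i + 1` and no smaller after it, contradicting maximality.
-/

open Finset

theorem Nat.sum_mul_pow_lt_pow {B n : ℕ} {f : ℕ → ℕ} (hf : ∀ j < n, f j < B) :
    ∑ j ∈ range n, f j * B ^ j < B ^ n := by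
  induction n with
  | zero => simp
  | succ n ih =>
    have hlow := ih fun j hj => hf j (by omega)
    calc ∑ j ∈ range (n + 1), f j * B ^ j
        < B ^ n + f n * B ^ n := by rw [sum_range_succ]; omega
      _ = (f n + 1) * B ^ n := by ring
      _ ≤ B * B ^ n := Nat.mul_le_mul_right _ (hf n n.lt_succ_self)
      _ = B ^ (n + 1) := by ring

theorem Nat.sum_mul_pow_lt_sum_mul_pow {B i n : ℕ} {f g : ℕ → ℕ} (hin : i ≤ n)
    (hf : ∀ j < i, f j < B) (hi : f i < g i) (hle : ∀ j, i < j → j ≤ n → f j ≤ g j) :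
    ∑ j ∈ range (n + 1), f j * B ^ j < ∑ j ∈ range (n + 1), g j * B ^ j := by
  induction n, hin using Nat.le_induction with
  | base =>
    have hlow := Nat.sum_mul_pow_lt_pow hf
    calc ∑ j ∈ range (i + 1), f j * B ^ j
        < B ^ i + f i * B ^ i := by rw [sum_range_succ]; omega
      _ = (f i + 1) * B ^ i := by ring
      _ ≤ g i * B ^ i := Nat.mul_le_mul_right _ hi
      _ ≤ ∑ j ∈ range (i + 1), g j * B ^ j := by rw [sum_range_succ]; omega
  | succ n _ ih =>
    rw [sum_range_succ _ (n + 1), sum_range_succ _ (n + 1)]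
    exact Nat.add_lt_add_of_lt_of_le (ih fun j hij hjn => hle j hij (by omega))
      (Nat.mul_le_mul_right _ (hle _ (by omega) le_rfl))

namespace NA

variable {A Q Q₁ Q₂ Q₃ : Type*}

theorem isDiSim_diSim (M : NA A Q₁) (N : NA A Q₂) : M.IsDiSim N (M.DiSim N) := by
  rintro p q ⟨R, hR, hpq⟩
  obtain ⟨hacc, hstep⟩ := hR p q hpq
  refine ⟨hacc, fun a p' hp' => ?_⟩
  obtain ⟨q', hq', hpq'⟩ := hstep a p' hp'
  exact ⟨q', hq', R, hR, hpq'⟩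

theorem diSim_refl (M : NA A Q) (p : Q) : M.DiSim M p p := by
  refine ⟨Eq, ?_, rfl⟩
  rintro p _ rfl
  exact ⟨id, fun a p' hp' => ⟨p', hp', rfl⟩⟩

theorem DiSim.trans {M : NA A Q₁} {N : NA A Q₂} {K : NA A Q₃} {p : Q₁} {q : Q₂} {r : Q₃}
    (hpq : M.DiSim N p q) (hqr : N.DiSim K q r) : M.DiSim K p r := by
  refine ⟨fun p r => ∃ q, M.DiSim N p q ∧ N.DiSim K q r, ?_, q, hpq, hqr⟩
  rintro p r ⟨q, hpq, hqr⟩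
  obtain ⟨hacc₁, hstep₁⟩ := isDiSim_diSim M N p q hpq
  obtain ⟨hacc₂, hstep₂⟩ := isDiSim_diSim N K q r hqr
  refine ⟨hacc₂ ∘ hacc₁, fun a p' hp' => ?_⟩
  obtain ⟨q', hq', hpq'⟩ := hstep₁ a p' hp'
  obtain ⟨r', hr', hqr'⟩ := hstep₂ a q' hq'
  exact ⟨r', hr', q', hpq', hqr'⟩

noncomputable def simRank (M : NA A Q) (q : Q) : ℕ :=
  {x | M.DiSim M x q}.ncard

theorem simRank_le_card [Finite Q] (M : NA A Q) (q : Q) : M.simRank q ≤ Nat.card Q :=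
  Set.ncard_le_card _

theorem simRank_mono [Finite Q] {M : NA A Q} {p q : Q} (h : M.DiSim M p q) :
    M.simRank p ≤ M.simRank q :=
  Set.ncard_le_ncard fun _ hx => DiSim.trans hx h

theorem simRank_lt_of_strictRel [Finite Q] {M : NA A Q} {p q : Q}
    (h : StrictRel (M.DiSim M) p q) : M.simRank p < M.simRank q :=
  Set.ncard_lt_ncard ⟨fun _ hx => DiSim.trans hx h.1, fun hsub => h.2 (hsub (diSim_refl M q))⟩

/-- Ranks are at most `|Q|`, so comparing these base-`(|Q| + 1)` numerals compares the rank vectors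
of runs lexicographically, from position `n` downwards. -/
noncomputable def runValue (M : NA A Q) (n : ℕ) (ρ : ℕ → Q) : ℕ :=
  ∑ j ∈ range (n + 1), M.simRank (ρ j) * (Nat.card Q + 1) ^ j

theorem runValue_lt_pow [Finite Q] (M : NA A Q) (n : ℕ) (ρ : ℕ → Q) :
    M.runValue n ρ < (Nat.card Q + 1) ^ (n + 1) :=
  Nat.sum_mul_pow_lt_pow fun _ _ => Nat.lt_succ_of_le (M.simRank_le_card _)

theorem runValue_lt_runValue [Finite Q] {M : NA A Q} {n i : ℕ} {ρ σ : ℕ → Q} (hin : i ≤ n)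
    (hi : StrictRel (M.DiSim M) (ρ i) (σ i)) (hle : ∀ j, i < j → j ≤ n → M.DiSim M (ρ j) (σ j)) :
    M.runValue n ρ < M.runValue n σ :=
  Nat.sum_mul_pow_lt_sum_mul_pow hin (fun _ _ => Nat.lt_succ_of_le (M.simRank_le_card _))
    (simRank_lt_of_strictRel hi) fun j hij hjn => simRank_mono (hle j hij hjn)

theorem FinRun.mono {M N : NA A Q} (h : M.trans ⊆ N.trans) {w : List A} {π : ℕ → Q}
    (hπ : M.FinRun w π) : N.FinRun w π :=
  fun i hi => h (hπ i hi)

theorem FinRun.congr {M : NA A Q} {w : List A} {π π' : ℕ → Q} (hπ : M.FinRun w π)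
    (h : ∀ j ≤ w.length, π j = π' j) : M.FinRun w π' := by
  intro i hi
  rw [← h i hi.le, ← h (i + 1) hi]
  exact hπ i hi

theorem finRun_cons {M : NA A Q} {a : A} {w : List A} {π : ℕ → Q} :
    M.FinRun (a :: w) π ↔ (π 0, a, π 1) ∈ M.trans ∧ M.FinRun w (fun j => π (j + 1)) := by
  constructor
  · intro h
    exact ⟨h 0 (by simp), fun i hi => h (i + 1) (by simpa using hi)⟩
  · rintro ⟨h0, h⟩ (_ | i) hi
    · exact h0
    · exact h i (by simpa using hi)

theorem finRun_append {M : NA A Q} {u v : List A} {π : ℕ → Q} :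
    M.FinRun (u ++ v) π ↔ M.FinRun u π ∧ M.FinRun v (fun j => π (j + u.length)) := by
  induction u generalizing π with
  | nil => exact ⟨fun h => ⟨fun i hi => absurd hi (Nat.not_lt_zero _), h⟩, And.right⟩
  | cons a u ih =>
    rw [List.cons_append, finRun_cons, finRun_cons, ih, and_assoc]
    rfl

theorem FinRun.exists_diSim {M : NA A Q₁} {N : NA A Q₂} {w : List A} {π : ℕ → Q₁} {q : Q₂}
    (hπ : M.FinRun w π) (hq : M.DiSim N (π 0) q) :
    ∃ ρ : ℕ → Q₂, ρ 0 = q ∧ N.FinRun w ρ ∧ ∀ j ≤ w.length, M.DiSim N (π j) (ρ j) := by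
  induction w generalizing π q with
  | nil =>
    refine ⟨fun _ => q, rfl, fun i hi => absurd hi (Nat.not_lt_zero _), fun j hj => ?_⟩
    obtain rfl : j = 0 := by simpa using hj
    exact hq
  | cons a w ih =>
    obtain ⟨hπ0, hπ'⟩ := finRun_cons.1 hπ
    obtain ⟨q', hq', hsim'⟩ := (isDiSim_diSim M N _ _ hq).2 a _ hπ0
    obtain ⟨ρ, hρ0, hρ, hsim⟩ := ih hπ' hsim'
    refine ⟨fun | 0 => q | j + 1 => ρ j, rfl, finRun_cons.2 ⟨by simpa [hρ0] using hq', hρ⟩, ?_⟩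
    rintro (_ | j) hj
    · exact hq
    · exact hsim j (by simpa using hj)

theorem exists_finRun_through {M : NA A Q} {u v : List A} {a : A} {ρ : ℕ → Q}
    (h0 : ρ 0 ∈ M.ini) (hρ : M.FinRun (u ++ a :: v) ρ) {p r : Q} (hpr : (p, a, r) ∈ M.trans)
    (hbw : M.BwFinTraceIncl M (ρ u.length) p) (hr : M.DiSim M (ρ (u.length + 1)) r) :
    ∃ σ : ℕ → Q, σ 0 ∈ M.ini ∧ M.FinRun (u ++ a :: v) σ ∧ σ (u.length + 1) = r ∧
      ∀ j ≤ v.length, M.DiSim M (ρ (j + 1 + u.length)) (σ (j + 1 + u.length)) := by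
  obtain ⟨hρu, hρav⟩ := finRun_append.1 hρ
  obtain ⟨-, hρv⟩ := finRun_cons.1 hρav
  obtain ⟨π, hπ0, hπ, hπu⟩ := hbw u ρ h0 hρu rfl
  obtain ⟨τ, hτ0, hτ, hsim⟩ := hρv.exists_diSim (q := r) (by simpa [add_comm] using hr)
  set σ : ℕ → Q := fun j => if j ≤ u.length then π j else τ (j - (u.length + 1))
  have hσ_prefix : ∀ j ≤ u.length, σ j = π j := fun j hj => if_pos hj
  have hσ_suffix : ∀ j, σ (j + 1 + u.length) = τ j := fun j => by
    rw [show σ (j + 1 + u.length) = τ (j + 1 + u.length - (u.length + 1)) from if_neg (by omega)]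
    congr 1
    omega
  have hσr : σ (u.length + 1) = r := by simpa [add_comm, hτ0] using hσ_suffix 0
  refine ⟨σ, by simpa [hσ_prefix 0 (Nat.zero_le _)] using hπ0, finRun_append.2 ⟨?_, ?_⟩, hσr,
    fun j hj => hσ_suffix j ▸ hsim j hj⟩
  · exact hπ.congr fun j hj => (hσ_prefix j hj).symm
  · refine finRun_cons.2 ⟨?_, hτ.congr fun j _ => (hσ_suffix j).symm⟩
    simpa [hσ_prefix _ le_rfl, hπu, zero_add, add_comm 1, hσr] using hpr

theorem exists_finRun_runValue_lt [Finite Q] {M : NA A Q} {w : List A} {ρ : ℕ → Q}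
    (h0 : ρ 0 ∈ M.ini) (hρ : M.FinRun w ρ) (hacc : ρ w.length ∈ M.acc) {i : ℕ}
    (hi : i < w.length) {p r : Q} (hpr : (p, w[i], r) ∈ M.trans)
    (hbw : M.BwFinTraceIncl M (ρ i) p) (hr : StrictRel (M.DiSim M) (ρ (i + 1)) r) :
    ∃ σ : ℕ → Q, σ 0 ∈ M.ini ∧ M.FinRun w σ ∧ σ w.length ∈ M.acc ∧
      M.runValue w.length ρ < M.runValue w.length σ := by
  have hw : w.take i ++ w[i] :: w.drop (i + 1) = w := by
    rw [← List.drop_eq_getElem_cons, List.take_append_drop]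
  have hu : (w.take i).length = i := List.length_take_of_le hi.le
  have hlen : w.length = (w.drop (i + 1)).length + 1 + i := by simp only [List.length_drop]; omega
  obtain ⟨σ, hσ0, hσ, hσr, hsim⟩ :=
    exists_finRun_through h0 (hw ▸ hρ) hpr (by rwa [hu]) (by rw [hu]; exact hr.1)
  rw [hw] at hσ
  rw [hu] at hσr hsim
  refine ⟨σ, hσ0, hσ, ?_, runValue_lt_runValue hi (hσr ▸ hr) fun j hij hjn => ?_⟩
  · rw [hlen] at hacc ⊢
    exact (isDiSim_diSim M M _ _ (hsim _ le_rfl)).1 hacc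
  · simpa [show j - (i + 1) + 1 + i = j by omega] using hsim (j - (i + 1)) (by omega)

theorem finLang_prune_subset (M : NA A Q) (P : Q × A × Q → Q × A × Q → Prop) :
    (M.prune P).FinLang ⊆ M.FinLang :=
  fun _ ⟨π, h0, hπ, hacc⟩ => ⟨π, h0, hπ.mono (Set.sep_subset _ _), hacc⟩

end NA

theorem prune_bwFinTraceIncl_strictDiSim_gfp_general
    {A Q : Type*} [Fintype Q] (M : NA A Q) :
    (M.prune (NA.PairRel (M.BwFinTraceIncl M) (NA.StrictRel (M.DiSim M)))).FinLang
      = M.FinLang := by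
  refine (M.finLang_prune_subset _).antisymm ?_
  rintro w ⟨ρ, h0, hρ, hacc⟩
  induction hk : (Nat.card Q + 1) ^ (w.length + 1) - M.runValue w.length ρ
    using Nat.strong_induction_on generalizing ρ with
  | _ k ih =>
    by_cases hkept : ∀ i (hi : i < w.length), ¬ ∃ t ∈ M.trans,
        NA.PairRel (M.BwFinTraceIncl M) (NA.StrictRel (M.DiSim M)) (ρ i, w[i], ρ (i + 1)) t
    · exact ⟨ρ, h0, fun i hi => ⟨hρ i hi, hkept i hi⟩, hacc⟩
    simp only [not_forall, not_not] at hkept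
    obtain ⟨i, hi, ⟨p, a, r⟩, hpr, rfl, hbw, hr⟩ := hkept
    obtain ⟨σ, hσ0, hσ, hσacc, hlt⟩ := NA.exists_finRun_runValue_lt h0 hρ hacc hi hpr hbw hr
    exact ih _ (by have := M.runValue_lt_pow w.length σ; omega) σ hσ0 hσ hσacc rfl

/-- `P(⊑ᵇʷ, ⊏ᵈⁱ⁻ˢⁱᵐ)` (backward finite trace inclusion on sources,
strict direct forward simulation on targets) is good for pruning on complete NFAs. -/
theorem prune_bwFinTraceIncl_strictDiSim_gfp
    {A Q : Type*} [Fintype A] [Fintype Q] (M : NA A Q) (hM : M.Complete) :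
    (M.prune (NA.PairRel (M.BwFinTraceIncl M) (NA.StrictRel (M.DiSim M)))).FinLang
      = M.FinLang :=
  prune_bwFinTraceIncl_strictDiSim_gfp_general M
end

section
/- Let A = (Σ, Q_A, I_A, F_A, δ_A) and B = (Σ, Q_B, I_B, F_B, δ_B) be complete NBAs over the same alphabet. The relation P(⊑^{bw}, ⊑^{f}), which compares source states of A-transitions with source states of B-transitions by cross backward finite trace inclusion and target states by cross fair trace inclusion, is good for A,B-pruning: L(A) ⊆ L(B) holds if and only if L(Prune(A, B, P(⊑^{bw}, ⊑^{f}))) ⊆ L(B) holds. -/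
/-- `P(⊑ᵇʷ, ⊑ᶠ)` (cross backward finite trace inclusion on sources,
cross fair trace inclusion on targets) is good for `A,B`-pruning on complete NBAs:
inclusion holds iff it holds after pruning `A` against `B`. -/
theorem pruneAB_bwFin_fair_good
    {A Q₁ Q₂ : Type*} [Fintype A] [Fintype Q₁] [Fintype Q₂]
    (M : NA A Q₁) (N : NA A Q₂) (hM : M.Complete) (hN : N.Complete) :
    (M.BuchiLang ⊆ N.BuchiLang ↔
      (M.pruneAB N (NA.PairRel (M.BwFinTraceIncl N) (M.FairTraceIncl N))).BuchiLang
        ⊆ N.BuchiLang) := by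
  constructor
  · intro h w hw
    apply h
    obtain ⟨π, h0, hrun, hfair⟩ := hw
    exact ⟨π, h0, fun i => (hrun i).1, hfair⟩
  · intro h w hw
    obtain ⟨π, h0, hrun, hfair⟩ := hw
    by_cases hc : ∀ i, ¬ ∃ t' ∈ N.trans,
        NA.PairRel (M.BwFinTraceIncl N) (M.FairTraceIncl N) (π i, w i, π (i+1)) t'
    · exact h ⟨π, h0, fun i => ⟨hrun i, hc i⟩, hfair⟩
    · push_neg at hc
      obtain ⟨i, t', ht'N, hP⟩ := hc
      obtain ⟨p', a, r'⟩ := t'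
      obtain ⟨ha, hb, hf⟩ := hP
      simp only at ha hb hf
      -- prefix: backward finite trace inclusion
      set wl : List A := List.ofFn (fun k : Fin i => w k) with hwl
      have hlen : wl.length = i := by simp [hwl]
      have hfin : M.FinRun wl π := by
        intro k hk
        have : wl.get ⟨k, hk⟩ = w k := by simp [hwl]
        rw [this]; exact hrun k
      obtain ⟨ρ, hρini, hρrun, hρend⟩ := hb wl π h0 hfin (by rw [hlen])
      rw [hlen] at hρend
      -- suffix: fair trace inclusion
      obtain ⟨σ, hσ0, hσrun, hσfair⟩ := hf (fun k => w (i+1+k)) (fun k => π (i+1+k)) rfl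
        (fun k => by
          have := hrun (i+1+k)
          have e : i + 1 + k + 1 = i + 1 + (k + 1) := by omega
          rw [e] at this; exact this)
      have hσF : N.Fair σ := by
        apply hσfair
        intro n
        obtain ⟨m, hm, hacc⟩ := hfair (n + i + 1)
        refine ⟨m - (i+1), by omega, ?_⟩
        have e : i + 1 + (m - (i+1)) = m := by omega
        simpa [e] using hacc
      refine ⟨fun k => if k ≤ i then ρ k else σ (k - (i+1)), ?_, ?_, ?_⟩
      · simpa using hρini
      · intro k
        rcases lt_trichotomy k i with hk | hk | hk
        · have h1 : k ≤ i := hk.le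
          have h2 : k + 1 ≤ i := hk
          simp only [if_pos h1, if_pos h2]
          have hk' : k < wl.length := by omega
          have := hρrun k hk'
          have e : wl.get ⟨k, hk'⟩ = w k := by simp [hwl]
          rwa [e] at this
        · subst hk
          have h2 : ¬ (k + 1 ≤ k) := by omega
          simp only [if_pos (le_refl k), if_neg h2]
          have e : k + 1 - (k + 1) = 0 := by omega
          rw [e, hσ0, hρend, ha]
          exact ht'N
        · have h1 : ¬ (k ≤ i) := by omega
          have h2 : ¬ (k + 1 ≤ i) := by omega
          simp only [if_neg h1, if_neg h2]
          have := hσrun (k - (i+1))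
          have e1 : i + 1 + (k - (i+1)) = k := by omega
          have e2 : k - (i+1) + 1 = k + 1 - (i+1) := by omega
          simp only [e2] at this
          simpa only [e1] using this
      · intro n
        obtain ⟨m, hm, hacc⟩ := hσF n
        refine ⟨m + i + 1, by omega, ?_⟩
        have h1 : ¬ (m + i + 1 ≤ i) := by omega
        have e : m + i + 1 - (i + 1) = m := by omega
        simp only [if_neg h1, e]
        exact hacc
end

section
/- Let A = (Σ, Q, I, F, δ) be a complete NBA. The saturation relation S(⊑^{bw-di}, ⊒^{bw-di}) — i.e., ((p,σ,r), (p′,σ,r′)) ∈ S iff p ⊑^{bw-di} p′ and r′ ⊑^{bw-di} r — is good for saturation: adding every transition (p,σ,r) for which there exists a transition (p′,σ,r′) ∈ δ with p ⊑^{bw-di} p′ and r′ ⊑^{bw-di} r preserves the language, that is, L(Sat(A, S(⊑^{bw-di}, ⊒^{bw-di}))) = L(A). -/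
/-!
Every state `q` of the saturated automaton is backward direct trace included in `q` itself in
`A`. Along a finite initial run of `Sat(A, S)`, replace each added transition `(p, σ, r)`, with
witness `(p', σ, r') ∈ δ`, as follows: reroute the run of `A` built so far from `p` to `p'`
(by `p ⊑ p'`), take `(p', σ, r')`, and reroute from `r'` back to `r` (by `r' ⊑ r`); neither
rerouting loses an accepting visit. Applied to the prefixes of an infinite fair run of
`Sat(A, S)`, this gives initial runs of `A` dominating it on ever longer prefixes, and since
`Q` is finite, Kőnig's lemma (compactness of `ℕ → Q`) assembles them into one infinite run,
which is fair.
-/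

theorem exists_forall_of_forall_exists_prefix {Q : Type*} [Finite Q] (P : ℕ → (ℕ → Q) → Prop)
    (hne : ∀ n, ∃ ρ, P n ρ) (hmono : ∀ n ρ, P (n + 1) ρ → P n ρ)
    (hloc : ∀ n ρ ρ', (∀ i ≤ n, ρ i = ρ' i) → P n ρ → P n ρ') :
    ∃ ρ, ∀ n, P n ρ := by
  let _ : TopologicalSpace Q := ⊥
  have : DiscreteTopology Q := ⟨rfl⟩
  have hclosed : ∀ n, IsClosed {ρ | P n ρ} := by
    intro n
    let restrict : (ℕ → Q) → Fin (n + 1) → Q := fun ρ i => ρ i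
    have : {ρ | P n ρ} = restrict ⁻¹' (restrict '' {ρ | P n ρ}) := by
      refine (Set.subset_preimage_image _ _).antisymm ?_
      rintro ρ ⟨ρ', hρ', heq⟩
      exact hloc n ρ' ρ (fun i hi => congrFun heq ⟨i, Nat.lt_succ_of_le hi⟩) hρ'
    rw [this]
    exact (isClosed_discrete _).preimage (by fun_prop)
  obtain ⟨ρ, hρ⟩ := IsCompact.nonempty_iInter_of_sequence_nonempty_isCompact_isClosed
    (fun n => {ρ | P n ρ}) (fun n => hmono n) hne (hclosed 0).isCompact hclosed
  exact ⟨ρ, Set.mem_iInter.mp hρ⟩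

namespace NA

variable {A Q : Type*}

theorem finRun_congr {M : NA A Q} {u : List A} {π ρ : ℕ → Q}
    (h : ∀ i ≤ u.length, π i = ρ i) (hπ : M.FinRun u π) : M.FinRun u ρ := fun i hi => by
  rw [← h i hi.le, ← h (i + 1) hi]
  exact hπ i hi

theorem finRun_append_singleton_iff {M : NA A Q} {u : List A} {a : A} {π : ℕ → Q} :
    M.FinRun (u ++ [a]) π ↔ M.FinRun u π ∧ (π u.length, a, π (u.length + 1)) ∈ M.trans := by
  simp only [FinRun, List.length_append, List.length_singleton]
  constructor
  · intro h
    refine ⟨fun i hi => ?_, ?_⟩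
    · simpa [List.getElem_append_left hi] using h i (by omega)
    · simpa using h u.length (by omega)
  · rintro ⟨h, hlast⟩ i hi
    rcases (Nat.lt_succ_iff.1 hi).lt_or_eq with hi | rfl
    · simpa [List.getElem_append_left hi] using h i hi
    · simpa using hlast

theorem finRun_ofFn_iff {M : NA A Q} {w : ℕ → A} {n : ℕ} {π : ℕ → Q} :
    M.FinRun (List.ofFn fun i : Fin n => w i) π ↔ ∀ i < n, (π i, w i, π (i + 1)) ∈ M.trans := by
  simp [FinRun]

theorem FinRun.snoc {M : NA A Q} {u : List A} {a : A} {π : ℕ → Q} {q : Q}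
    (hπ : M.FinRun u π) (ht : (π u.length, a, q) ∈ M.trans) :
    M.FinRun (u ++ [a]) (Function.update π (u.length + 1) q) := by
  have hagree : ∀ i ≤ u.length, π i = Function.update π (u.length + 1) q i :=
    fun i hi => (Function.update_of_ne (by omega) _ _).symm
  refine finRun_append_singleton_iff.2 ⟨finRun_congr hagree hπ, ?_⟩
  rwa [← hagree _ le_rfl, Function.update_self]

theorem bwDiTraceIncl_refl (M : NA A Q) (p : Q) : M.BwDiTraceIncl M p p :=
  fun _ π h0 hπ hp => ⟨π, h0, hπ, hp, fun _ _ h => h⟩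

theorem subset_buchiLang_saturate {M : NA A Q} {S : (Q × A × Q) → (Q × A × Q) → Prop}
    (hS : ∀ t ∈ M.trans, S t t) : M.BuchiLang ⊆ (M.saturate S).BuchiLang :=
  fun _ ⟨π, h0, hπ, hfair⟩ => ⟨π, h0, fun i => ⟨_, hπ i, hS _ (hπ i)⟩, hfair⟩

theorem bwDiTraceIncl_saturate_self (M : NA A Q) (q : Q) :
    (M.saturate (PairRel (M.BwDiTraceIncl M) fun r r' => M.BwDiTraceIncl M r' r)).BwDiTraceIncl
      M q q := by
  intro u
  induction u using List.reverseRecOn generalizing q with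
  | nil => exact fun π h0 _ hq => ⟨π, h0, fun _ hi => absurd hi (Nat.not_lt_zero _), hq,
      fun _ _ h => h⟩
  | append_singleton u a ih =>
    intro π h0 hπ hq
    obtain ⟨hπ, ⟨p', a', r'⟩, ht, rfl : a = a', hp, hr⟩ := finRun_append_singleton_iff.1 hπ
    dsimp only at hp hr
    obtain ⟨ρ, hρ0, hρ, hρn, hρacc⟩ := ih _ π h0 hπ rfl
    obtain ⟨τ, hτ0, hτ, hτn, hτacc⟩ := hp u ρ hρ0 hρ hρn
    obtain ⟨σ, hσ0, hσ, hσn, hσacc⟩ := hr (u ++ [a]) _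
      (by rwa [Function.update_of_ne (by omega)]) (hτ.snoc (hτn ▸ ht)) (by simp)
    simp only [List.length_append, List.length_singleton] at hq hσ hσn hσacc ⊢
    refine ⟨σ, hσ0, hσ, hσn.trans hq, fun i hi hacc => ?_⟩
    rcases hi.lt_or_eq with hi | rfl
    · refine hσacc i hi.le ?_
      rw [Function.update_of_ne (by omega)]
      exact hτacc i (by omega) (hρacc i (by omega) hacc)
    · exact hσn ▸ hq ▸ hacc

theorem buchiLang_subset_of_bwDiTraceIncl_self [Finite Q] {M N : NA A Q}
    (h : ∀ q, N.BwDiTraceIncl M q q) : N.BuchiLang ⊆ M.BuchiLang := by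
  rintro w ⟨π, hπ0, hπ, hfair⟩
  obtain ⟨ρ, hρ⟩ := exists_forall_of_forall_exists_prefix
    (fun n ρ => ρ 0 ∈ M.ini ∧ (∀ i < n, (ρ i, w i, ρ (i + 1)) ∈ M.trans) ∧
      ∀ i ≤ n, π i ∈ N.acc → ρ i ∈ M.acc)
    (fun n => by
      obtain ⟨ρ, hρ0, hρ, -, hρacc⟩ := h (π n) (List.ofFn fun i : Fin n => w i) π hπ0
        (finRun_ofFn_iff.2 fun i _ => hπ i) (by simp)
      exact ⟨ρ, hρ0, finRun_ofFn_iff.1 hρ, by simpa using hρacc⟩)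
    (fun n ρ ⟨h0, hρ, hacc⟩ => ⟨h0, fun i hi => hρ i (by omega), fun i hi => hacc i (by omega)⟩)
    (fun n ρ ρ' heq ⟨h0, hρ, hacc⟩ => by
      refine ⟨heq 0 (Nat.zero_le n) ▸ h0, fun i hi => ?_, fun i hi hπi => ?_⟩
      · rw [← heq i hi.le, ← heq (i + 1) hi]; exact hρ i hi
      · rw [← heq i hi]; exact hacc i hi hπi)
  exact ⟨ρ, (hρ 0).1, fun i => (hρ (i + 1)).2.1 i (Nat.lt_succ_self i),
    fun n => let ⟨m, hm, hacc⟩ := hfair n; ⟨m, hm, (hρ m).2.2 m le_rfl hacc⟩⟩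

end NA

theorem saturate_bwDiTraceIncl_gfs_general
    {A Q : Type*} [Fintype Q] (M : NA A Q) :
    (M.saturate (NA.PairRel (M.BwDiTraceIncl M)
        (fun r r' => M.BwDiTraceIncl M r' r))).BuchiLang = M.BuchiLang :=
  (NA.buchiLang_subset_of_bwDiTraceIncl_self (NA.bwDiTraceIncl_saturate_self M)).antisymm
    (NA.subset_buchiLang_saturate fun _ _ =>
      ⟨rfl, NA.bwDiTraceIncl_refl M _, NA.bwDiTraceIncl_refl M _⟩)

/-- `S(⊑ᵇʷ⁻ᵈⁱ, ⊒ᵇʷ⁻ᵈⁱ)` (backward direct trace inclusion on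
sources, its converse on targets) is good for saturation on complete NBAs. -/
theorem saturate_bwDiTraceIncl_gfs
    {A Q : Type*} [Fintype A] [Fintype Q] (M : NA A Q) (hM : M.Complete) :
    (M.saturate (NA.PairRel (M.BwDiTraceIncl M)
        (fun r r' => M.BwDiTraceIncl M r' r))).BuchiLang = M.BuchiLang :=
  saturate_bwDiTraceIncl_gfs_general M
end

section
/- Let A = (Σ, Q, I, F, δ) be a complete NBA and let S = S(⊒^{f}, ⊑^{f}) — i.e., ((p,σ,r), (p′,σ,r′)) ∈ S iff p′ ⊑^{f} p and r ⊑^{f} r′, using fair trace inclusion. If every transition of Sat(A, S) that is not a transition of A is transient in Sat(A, S), then S is good for saturation: L(Sat(A, S)) = L(A). -/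
/- A fair initial run of the saturated automaton uses the new transitions only finitely often,
since each is transient and there are finitely many transitions. Walking backwards from the last
new transition, a fair run of `M` from each state of the run is rebuilt: an added transition
`p →σ r` is covered by some `p' →σ r'` of `M` with `p' ⊑ᶠ p` and `r ⊑ᶠ r'`, so a fair run
from `r` yields one from `r'`, hence one from `p'` through `p' →σ r'`, hence one from `p`. -/

namespace NA

variable {A Q : Type*} {M : NA A Q}

theorem fairTraceIncl_refl (M : NA A Q) (p : Q) : M.FairTraceIncl M p p :=
  fun _ π hπ hrun => ⟨π, hπ, hrun, id⟩

theorem pairRel_refl {Rb Rf : Q → Q → Prop} (hb : ∀ p, Rb p p) (hf : ∀ p, Rf p p)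
    (t : Q × A × Q) : PairRel Rb Rf t t :=
  ⟨rfl, hb _, hf _⟩

theorem trans_subset_saturate {S : (Q × A × Q) → (Q × A × Q) → Prop} (hS : ∀ t, S t t) :
    M.trans ⊆ (M.saturate S).trans :=
  fun t ht => ⟨t, ht, hS t⟩

theorem buchiLang_subset_saturate {S : (Q × A × Q) → (Q × A × Q) → Prop} (hS : ∀ t, S t t) :
    M.BuchiLang ⊆ (M.saturate S).BuchiLang :=
  fun _ ⟨π, hini, hrun, hfair⟩ => ⟨π, hini, fun i => trans_subset_saturate hS (hrun i), hfair⟩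

/-- `Sat(M, S(⊒ᶠ, ⊑ᶠ))`. -/
abbrev fairSaturate (M : NA A Q) : NA A Q :=
  M.saturate (PairRel (fun p p' => M.FairTraceIncl M p' p) (M.FairTraceIncl M))

def HasFairRun (M : NA A Q) (p : Q) (w : ℕ → A) : Prop :=
  ∃ ρ : ℕ → Q, ρ 0 = p ∧ M.InfRun w ρ ∧ M.Fair ρ

theorem mem_buchiLang_of_hasFairRun {p : Q} {w : ℕ → A} (hp : p ∈ M.ini)
    (h : M.HasFairRun p w) : w ∈ M.BuchiLang := by
  obtain ⟨ρ, rfl, hrun, hfair⟩ := h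
  exact ⟨ρ, hp, hrun, hfair⟩

theorem FairTraceIncl.hasFairRun {p q : Q} {w : ℕ → A} (hpq : M.FairTraceIncl M p q)
    (h : M.HasFairRun p w) : M.HasFairRun q w := by
  obtain ⟨ρ, hρ, hrun, hfair⟩ := h
  obtain ⟨τ, hτ, hrun', hfair'⟩ := hpq w ρ hρ hrun
  exact ⟨τ, hτ, hrun', hfair' hfair⟩

theorem HasFairRun.cons {p r : Q} {w : ℕ → A} (ht : (p, w 0, r) ∈ M.trans)
    (h : M.HasFairRun r (fun i => w (i + 1))) : M.HasFairRun p w := by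
  obtain ⟨ρ, rfl, hrun, hfair⟩ := h
  refine ⟨fun | 0 => p | i + 1 => ρ i, rfl, ?_, fun n => ?_⟩
  · rintro (_ | i)
    · exact ht
    · exact hrun i
  · obtain ⟨m, hnm, hacc⟩ := hfair n
    exact ⟨m + 1, by omega, hacc⟩

theorem HasFairRun.of_mem_fairSaturate {p r : Q} {w : ℕ → A}
    (ht : (p, w 0, r) ∈ M.fairSaturate.trans)
    (h : M.HasFairRun r (fun i => w (i + 1))) : M.HasFairRun p w := by
  obtain ⟨⟨p', a, r'⟩, ht', rfl, hp, hr⟩ := ht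
  exact hp.hasFairRun (HasFairRun.cons ht' (hr.hasFairRun h))

theorem hasFairRun_drop {w : ℕ → A} {π : ℕ → Q} {n : ℕ}
    (hrun : ∀ i, n ≤ i → (π i, w i, π (i + 1)) ∈ M.trans) (hfair : M.Fair π) :
    M.HasFairRun (π n) (fun i => w (i + n)) := by
  refine ⟨fun i => π (i + n), by simp, fun i => ?_, fun m => ?_⟩
  · simpa only [Nat.add_right_comm i 1 n] using hrun (i + n) (by omega)
  · obtain ⟨j, hj, hacc⟩ := hfair (m + n)
    exact ⟨j - n, by omega, by simpa only [Nat.sub_add_cancel (by omega : n ≤ j)] using hacc⟩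

theorem hasFairRun_of_fairSaturate_infRun {w : ℕ → A} {π : ℕ → Q} {n : ℕ}
    (hrun : M.fairSaturate.InfRun w π)
    (hfair : M.Fair π) (htail : ∀ i, n ≤ i → (π i, w i, π (i + 1)) ∈ M.trans) :
    M.HasFairRun (π 0) w := by
  have hsuffix : ∀ k ≤ n, M.HasFairRun (π k) (fun i => w (i + k)) := fun k hk =>
    Nat.decreasingInduction (motive := fun k _ => M.HasFairRun (π k) (fun i => w (i + k)))
      (fun k _ ih => HasFairRun.of_mem_fairSaturate (r := π (k + 1)) (by simpa using hrun k)
        (by simpa only [Nat.add_right_comm _ 1 k, Nat.add_assoc] using ih))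
      (hasFairRun_drop htail hfair) hk
  simpa using hsuffix 0 (Nat.zero_le n)

theorem finite_setOf_notMem_of_transient [Finite A] [Finite Q] {N : NA A Q}
    {T : Set (Q × A × Q)} (htransient : ∀ t ∈ N.trans, t ∉ T → N.Transient t)
    {w : ℕ → A} {π : ℕ → Q} (hrun : N.InfRun w π) :
    {i | (π i, w i, π (i + 1)) ∉ T}.Finite :=
  Set.Finite.of_finite_image (Set.toFinite _)
    fun i hi j _ hij => htransient _ (hrun i) hi w π hrun i j rfl hij.symm

theorem buchiLang_fairSaturate_subset [Finite A] [Finite Q]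
    (htransient : ∀ t ∈ M.fairSaturate.trans, t ∉ M.trans → M.fairSaturate.Transient t) :
    M.fairSaturate.BuchiLang ⊆ M.BuchiLang := by
  rintro w ⟨π, hini, hrun, hfair⟩
  obtain ⟨n, hn⟩ := (finite_setOf_notMem_of_transient htransient hrun).bddAbove
  have htail : ∀ i, n + 1 ≤ i → (π i, w i, π (i + 1)) ∈ M.trans := fun i hi => by
    by_contra h
    exact absurd (hn h) (by omega)
  exact mem_buchiLang_of_hasFairRun hini (hasFairRun_of_fairSaturate_infRun hrun hfair htail)

end NA

theorem saturate_fairTraceIncl_transient_gfs_general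
    {A Q : Type*} [Fintype A] [Fintype Q] (M : NA A Q)
    (S : (Q × A × Q) → (Q × A × Q) → Prop)
    (hS : S = NA.PairRel (fun p p' => M.FairTraceIncl M p' p) (M.FairTraceIncl M))
    (htransient : ∀ t, t ∈ (M.saturate S).trans → t ∉ M.trans →
      (M.saturate S).Transient t) :
    (M.saturate S).BuchiLang = M.BuchiLang := by
  subst hS
  exact (NA.buchiLang_fairSaturate_subset htransient).antisymm
    (NA.buchiLang_subset_saturate
      (NA.pairRel_refl (NA.fairTraceIncl_refl M) (NA.fairTraceIncl_refl M)))

/-- `S(⊒ᶠ, ⊑ᶠ)` using fair trace inclusion is good for saturation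
on complete NBAs, provided every newly added transition is transient in the
saturated automaton. -/
theorem saturate_fairTraceIncl_transient_gfs
    {A Q : Type*} [Fintype A] [Fintype Q] (M : NA A Q) (hM : M.Complete)
    (S : (Q × A × Q) → (Q × A × Q) → Prop)
    (hS : S = NA.PairRel (fun p p' => M.FairTraceIncl M p' p) (M.FairTraceIncl M))
    (htransient : ∀ t, t ∈ (M.saturate S).trans → t ∉ M.trans →
      (M.saturate S).Transient t) :
    (M.saturate S).BuchiLang = M.BuchiLang :=
  saturate_fairTraceIncl_transient_gfs_general M S hS htransient
end

section
/- Let A = (Σ, Q, I, F, δ) be a complete NFA. The saturation relation S(⊒^{fw}, ⊑^{fw}) — i.e., ((p,σ,r), (p′,σ,r′)) ∈ S iff p′ ⊑^{fw} p and r ⊑^{fw} r′, using forward finite trace inclusion — is good for saturation: L(Sat(A, S(⊒^{fw}, ⊑^{fw}))) = L(A). -/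
private lemma sat_key {A Q : Type*} (M : NA A Q) (w : List A) (π : ℕ → Q)
    (hrun : (M.saturate (NA.PairRel (fun p p' => M.FwFinTraceIncl M p' p)
        (M.FwFinTraceIncl M))).FinRun w π)
    (hacc : π w.length ∈ M.acc) :
    ∀ j, j ≤ w.length → ∃ ρ : ℕ → Q, ρ 0 = π (w.length - j) ∧
      M.FinRun (w.drop (w.length - j)) ρ ∧ ρ j ∈ M.acc := by
  intro j
  induction j with
  | zero =>
    intro _
    refine ⟨fun _ => π w.length, by simp, ?_, hacc⟩
    intro i hi
    simp at hi
  | succ j ih =>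
    intro hj
    obtain ⟨ρ, hρ0, hρrun, hρacc⟩ := ih (by omega)
    set k := w.length - (j + 1) with hk
    have hk1 : k + 1 = w.length - j := by omega
    have hklt : k < w.length := by omega
    -- unpack the saturated transition at position k
    obtain ⟨⟨p', a, r'⟩, ht', hsym, hb, hf⟩ := hrun k hklt
    simp only [NA.PairRel] at hsym hb hf
    -- match the suffix run from π (k+1) by one from r'
    have hρ0' : ρ 0 = π (k + 1) := by rw [hρ0, hk1]
    have hlen1 : (w.drop (k + 1)).length = j := by simp; omega
    rw [← hk1] at hρrun
    obtain ⟨σ, hσ0, hσrun, hσacc⟩ :=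
      hf (w.drop (k + 1)) ρ hρ0' hρrun (by rw [hlen1]; exact hρacc)
    have hσaccj : σ j ∈ M.acc := by rw [hlen1] at hσacc; exact hσacc
    -- prepend the real transition (p', a, r')
    set τ : ℕ → Q := fun i => if i = 0 then p' else σ (i - 1) with hτ
    have hlen2 : (w.drop k).length = j + 1 := by simp; omega
    have hτrun : M.FinRun (w.drop k) τ := by
      intro i hi
      match i with
      | 0 =>
        have hg : (w.drop k).get ⟨0, hi⟩ = a := by
          have : (w.drop k).get ⟨0, hi⟩ = w[k] := by
            simp [List.getElem_drop]
          rw [this]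
          exact hsym
        simp only [hτ, hg]
        simpa [hσ0] using ht'
      | (m + 1) =>
        have hm : m < (w.drop (k + 1)).length := by
          rw [hlen1]; rw [hlen2] at hi; omega
        have hg : (w.drop k).get ⟨m + 1, hi⟩ = (w.drop (k + 1)).get ⟨m, hm⟩ := by
          simp [List.getElem_drop]
          congr 1
          omega
        simp only [hτ, hg]
        simpa using hσrun m hm
    have hτacc : τ (w.drop k).length ∈ M.acc := by
      rw [hlen2]; simpa [hτ] using hσaccj
    -- match the trace from p' by one from π k
    obtain ⟨ρ', hρ'0, hρ'run, hρ'acc⟩ := hb (w.drop k) τ (by simp [hτ]) hτrun hτacc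
    rw [hlen2] at hρ'acc
    exact ⟨ρ', by rw [hρ'0], hρ'run, hρ'acc⟩

/-- `S(⊒ᶠʷ, ⊑ᶠʷ)` using forward finite trace inclusion is good for
saturation on complete NFAs. -/
theorem saturate_fwFinTraceIncl_gfs
    {A Q : Type*} [Fintype A] [Fintype Q] (M : NA A Q) (hM : M.Complete) :
    (M.saturate (NA.PairRel (fun p p' => M.FwFinTraceIncl M p' p)
        (M.FwFinTraceIncl M))).FinLang = M.FinLang := by
  ext w
  constructor
  · rintro ⟨π, hini, hrun, hacc⟩
    obtain ⟨ρ, hρ0, hρrun, hρacc⟩ := sat_key M w π hrun hacc w.length le_rfl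
    simp only [Nat.sub_self, List.drop_zero] at hρ0 hρrun
    exact ⟨ρ, by rw [hρ0]; exact hini, hρrun, hρacc⟩
  · rintro ⟨π, hini, hrun, hacc⟩
    refine ⟨π, hini, ?_, hacc⟩
    intro i hi
    refine ⟨(π i, w.get ⟨i, hi⟩, π (i + 1)), hrun i hi, rfl, ?_, ?_⟩ <;>
      exact fun u ρ h0 hr ha => ⟨ρ, h0, hr, ha⟩
end

section
/- Let A = (Σ, Q, I, F, δ) be a complete NFA. The saturation relation S(⊑^{bw}, ⊒^{bw}) — i.e., ((p,σ,r), (p′,σ,r′)) ∈ S iff p ⊑^{bw} p′ and r′ ⊑^{bw} r, using backward finite trace inclusion — is good for saturation: L(Sat(A, S(⊑^{bw}, ⊒^{bw}))) = L(A). -/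
lemma NA.finRun_concat {A Q : Type*} (M : NA A Q) (w : List A) (a : A) (π : ℕ → Q) :
    M.FinRun (w ++ [a]) π ↔
      M.FinRun w π ∧ (π w.length, a, π (w.length + 1)) ∈ M.trans := by
  constructor
  · intro h
    constructor
    · intro i hi
      have hi' : i < (w ++ [a]).length := by simp; omega
      have := h i hi'
      rwa [show (w ++ [a]).get ⟨i, hi'⟩ = w.get ⟨i, hi⟩ by
        simp [List.get_eq_getElem, List.getElem_append_left hi]] at this
    · have hi' : w.length < (w ++ [a]).length := by simp
      have := h w.length hi'
      rwa [show (w ++ [a]).get ⟨w.length, hi'⟩ = a by simp] at this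
  · rintro ⟨h1, h2⟩ i hi
    simp only [List.length_append, List.length_singleton] at hi
    rcases lt_or_eq_of_le (Nat.lt_succ_iff.mp hi) with hlt | heq
    · have : (w ++ [a]).get ⟨i, by simp; omega⟩ = w.get ⟨i, hlt⟩ := by
        simp [List.get_eq_getElem, List.getElem_append_left hlt]
      rw [this]; exact h1 i hlt
    · subst heq
      have : (w ++ [a]).get ⟨w.length, by simp⟩ = a := by simp
      rw [this]; exact h2

/-- Any initial run of the saturated automaton ending at a state `s` can be matched by
an initial run of `M` ending at `s`. -/
lemma NA.saturate_bw_run {A Q : Type*} (M : NA A Q) (w : List A) (π : ℕ → Q)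
    (h0 : π 0 ∈ M.ini)
    (hrun : (M.saturate (NA.PairRel (M.BwFinTraceIncl M)
        (fun r r' => M.BwFinTraceIncl M r' r))).FinRun w π) :
    ∃ ρ : ℕ → Q, ρ 0 ∈ M.ini ∧ M.FinRun w ρ ∧ ρ w.length = π w.length := by
  induction w using List.reverseRecOn with
  | nil => exact ⟨π, h0, fun i hi => absurd hi (by simp), rfl⟩
  | append_singleton w a ih =>
    rw [NA.finRun_concat] at hrun
    obtain ⟨hrun, hlast⟩ := hrun
    obtain ⟨ρ, hρ0, hρrun, hρend⟩ := ih hrun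
    obtain ⟨⟨p', a, r'⟩, ht, ha, hb, hf⟩ := hlast
    simp only [NA.PairRel] at ha hb hf
    subst ha
    rcases hb w ρ hρ0 hρrun hρend with ⟨τ, hτ0, hτrun, hτend⟩
    -- extend τ with the transition (p', a, r')
    set τ' : ℕ → Q := fun i => if i ≤ w.length then τ i else r' with hτ'def
    have hτ'run : M.FinRun (w ++ [a]) τ' := by
      rw [NA.finRun_concat]
      constructor
      · intro i hi
        have e1 : τ' i = τ i := by simp [hτ'def, le_of_lt hi]
        have e2 : τ' (i + 1) = τ (i + 1) := by simp [hτ'def, Nat.succ_le_of_lt hi]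
        rw [e1, e2]; exact hτrun i hi
      · have e1 : τ' w.length = τ w.length := by simp [hτ'def]
        have e2 : τ' (w.length + 1) = r' := by simp [hτ'def]
        rw [e1, e2, hτend]; exact ht
    have hτ'0 : τ' 0 ∈ M.ini := by simpa [hτ'def] using hτ0
    have hτ'end : τ' (w ++ [a]).length = r' := by simp [hτ'def]
    rcases hf (w ++ [a]) τ' hτ'0 hτ'run hτ'end with ⟨σ, hσ0, hσrun, hσend⟩
    exact ⟨σ, hσ0, hσrun, by simpa using hσend⟩

/-- `S(⊑ᵇʷ, ⊒ᵇʷ)` using backward finite trace inclusion is good for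
saturation on complete NFAs. -/
theorem saturate_bwFinTraceIncl_gfs
    {A Q : Type*} [Fintype A] [Fintype Q] (M : NA A Q) (hM : M.Complete) :
    (M.saturate (NA.PairRel (M.BwFinTraceIncl M)
        (fun r r' => M.BwFinTraceIncl M r' r))).FinLang = M.FinLang := by
  ext w
  constructor
  · rintro ⟨π, h0, hrun, hacc⟩
    obtain ⟨ρ, hρ0, hρrun, hρend⟩ := M.saturate_bw_run w π h0 hrun
    exact ⟨ρ, hρ0, hρrun, hρend ▸ hacc⟩
  · rintro ⟨π, h0, hrun, hacc⟩
    refine ⟨π, h0, fun i hi => ⟨_, hrun i hi, rfl, ?_, ?_⟩, hacc⟩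
    · exact fun v σ hσ0 hσrun hσend => ⟨σ, hσ0, hσrun, hσend⟩
    · exact fun v σ hσ0 hσrun hσend => ⟨σ, hσ0, hσrun, hσend⟩
end
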